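/- arXiv:1507.07786 — 4 statements merged into one kernel-verified Lean document; each statement's English description precedes it below -/
import Mathlib

section
/- Let a ∈ W^{1,1}(0,1) with a(x₀)=0 for some x₀ ∈ (0,1), a>0 on [0,1]\{x₀}, and (x−x₀)a'(x) ≤ K₁ a(x) a.e. in [0,1] with K₁ ∈ (0,1). Then for every γ > K₁, lim_{x→x₀} |x−x₀|^γ / a(x) = 0. -/
/-!
Away from `x₀` the function `q x = a x * |x - x₀| ^ (-K₁)` is absolutely continuous, and the
degeneracy condition is exactly `(x - x₀) * q' x ≤ 0` a.e.: `q` decreases as `x` moves away from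
`x₀` on either side. Hence `a x ≥ c * |x - x₀| ^ K₁` with `c = min (q 0) (q 1) > 0`, and
`|x - x₀| ^ γ / a x ≤ |x - x₀| ^ (γ - K₁) / c → 0`.
-/

open Set MeasureTheory intervalIntegral Filter

namespace AbsolutelyContinuousOnInterval

theorem congr {f g : ℝ → ℝ} {u v : ℝ} (hf : AbsolutelyContinuousOnInterval f u v)
    (hfg : EqOn f g (uIcc u v)) : AbsolutelyContinuousOnInterval g u v := by
  rw [absolutelyContinuousOnInterval_iff] at hf ⊢
  intro ε hε
  obtain ⟨δ, hδ, h⟩ := hf ε hε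
  refine ⟨δ, hδ, fun E hE hlen => ?_⟩
  convert h E hE hlen using 2 with i hi
  rw [hfg (hE.1 i hi).1, hfg (hE.1 i hi).2]

theorem le_of_ae_deriv_nonneg {f : ℝ → ℝ} {u v : ℝ}
    (hf : AbsolutelyContinuousOnInterval f u v) (huv : u ≤ v)
    (hf' : ∀ᵐ t, t ∈ Ioo u v → 0 ≤ deriv f t) : f u ≤ f v := by
  have h : 0 ≤ ∫ t in u..v, deriv f t :=
    integral_nonneg_of_ae_restrict huv <| ae_restrict_of_ae_eq_of_ae_restrict Ioo_ae_eq_Icc <|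
      (ae_restrict_iff' measurableSet_Ioo).2 hf'
  linarith [hf.integral_deriv_eq_sub]

theorem le_of_ae_deriv_nonpos {f : ℝ → ℝ} {u v : ℝ}
    (hf : AbsolutelyContinuousOnInterval f u v) (huv : u ≤ v)
    (hf' : ∀ᵐ t, t ∈ Ioo u v → deriv f t ≤ 0) : f v ≤ f u := by
  have := hf.neg.le_of_ae_deriv_nonneg huv <| by
    filter_upwards [hf'] with t ht ht' using by simpa [deriv.neg'] using ht ht'
  simpa using this

end AbsolutelyContinuousOnInterval

theorem absolutelyContinuousOnInterval_of_eq_add_integral {f f' : ℝ → ℝ} {u v : ℝ}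
    (hf' : IntervalIntegrable f' volume u v) (hf : ∀ x ∈ uIcc u v, f x = f u + ∫ t in u..x, f' t) :
    AbsolutelyContinuousOnInterval f u v :=
  (((contDiffOn_const (c := f u)).absolutelyContinuousOnInterval).add
    (hf'.absolutelyContinuousOnInterval_intervalIntegral left_mem_uIcc)).congr
    fun x hx => (hf x hx).symm

theorem min_le_of_ae_mul_deriv_nonpos {q : ℝ → ℝ} {p r x₀ x : ℝ}
    (hq : ∀ u v, uIcc u v ⊆ Icc p r → x₀ ∉ uIcc u v → AbsolutelyContinuousOnInterval q u v)
    (hq' : ∀ᵐ t, t ∈ Ioo p r → t ≠ x₀ → (t - x₀) * deriv q t ≤ 0)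
    (hx : x ∈ Icc p r) (hxx₀ : x ≠ x₀) : min (q p) (q r) ≤ q x := by
  rcases hxx₀.lt_or_gt with hlt | hgt
  · refine min_le_of_left_le <| (hq p x ?_ ?_).le_of_ae_deriv_nonneg hx.1 ?_
    · rw [uIcc_of_le hx.1]; exact Icc_subset_Icc le_rfl hx.2
    · rw [uIcc_of_le hx.1]; exact fun h => h.2.not_gt hlt
    · filter_upwards [hq'] with t ht ⟨hpt, htx⟩
      exact nonneg_of_mul_nonpos_right (ht ⟨hpt, by linarith [hx.2]⟩ (by linarith))
        (by linarith)
  · refine min_le_of_right_le <| (hq x r ?_ ?_).le_of_ae_deriv_nonpos hx.2 ?_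
    · rw [uIcc_of_le hx.2]; exact Icc_subset_Icc hx.1 le_rfl
    · rw [uIcc_of_le hx.2]; exact fun h => h.1.not_gt hgt
    · filter_upwards [hq'] with t ht ⟨hxt, htr⟩
      exact nonpos_of_mul_nonpos_right (ht ⟨by linarith [hx.1], htr⟩ (by linarith))
        (by linarith)

theorem hasDerivAt_abs_sub_rpow {x₀ x : ℝ} (hx : x ≠ x₀) (p : ℝ) :
    HasDerivAt (fun y => |y - x₀| ^ p) (p * |x - x₀| ^ p / (x - x₀)) x := by
  have hx' : x - x₀ ≠ 0 := sub_ne_zero.2 hx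
  have habs : HasDerivAt (fun y => |y - x₀|) (SignType.sign (x - x₀) : ℝ) x :=
    (hasDerivAt_abs hx').comp_sub_const x x₀
  convert habs.rpow_const (p := p) (Or.inl (abs_ne_zero.2 hx')) using 1
  rw [Real.rpow_sub_one (abs_ne_zero.2 hx')]
  rcases hx'.lt_or_gt with h | h
  · simp only [abs_of_neg h, neg_sub, sign_neg h, SignType.coe_neg, SignType.coe_one, neg_mul,
      one_mul]
    field_simp
    ring
  · simp only [abs_of_pos h, sign_pos h, SignType.coe_one, one_mul]
    field_simp

theorem absolutelyContinuousOnInterval_abs_sub_rpow {x₀ u v : ℝ} (h : x₀ ∉ uIcc u v) (p : ℝ) :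
    AbsolutelyContinuousOnInterval (fun y => |y - x₀| ^ p) u v := by
  refine ContDiffOn.absolutelyContinuousOnInterval fun y hy => ?_
  have hy' : y - x₀ ≠ 0 := sub_ne_zero.2 (ne_of_mem_of_not_mem hy h)
  have habs : ContDiffAt ℝ 1 (fun y => |y - x₀|) y :=
    (contDiffAt_abs hy').comp y (contDiffAt_id.sub contDiffAt_const)
  exact (habs.rpow_const_of_ne (abs_ne_zero.2 hy')).contDiffWithinAt

theorem mul_deriv_mul_abs_sub_rpow_nonpos {a : ℝ → ℝ} {x₀ K x a'x : ℝ} (hx : x ≠ x₀)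
    (ha : HasDerivAt a a'x x) (hdeg : (x - x₀) * a'x ≤ K * a x) :
    (x - x₀) * deriv (fun y => a y * |y - x₀| ^ (-K)) x ≤ 0 := by
  rw [(ha.fun_mul (hasDerivAt_abs_sub_rpow hx (-K))).deriv]
  have : (x - x₀) * (a'x * |x - x₀| ^ (-K) + a x * (-K * |x - x₀| ^ (-K) / (x - x₀)))
      = |x - x₀| ^ (-K) * ((x - x₀) * a'x - K * a x) := by
    field_simp; ring
  rw [this]
  exact mul_nonpos_of_nonneg_of_nonpos (by positivity) (by linarith)

theorem exists_pos_mul_abs_sub_rpow_le {a a' : ℝ → ℝ} {x₀ K : ℝ} (hx₀ : x₀ ∈ Ioo (0 : ℝ) 1)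
    (ha_deriv : ∀ᵐ x ∂(volume.restrict (Ioo (0 : ℝ) 1)), HasDerivAt a (a' x) x)
    (ha'_int : IntegrableOn a' (Icc 0 1))
    (ha_FTC : ∀ x ∈ Icc (0 : ℝ) 1, a x = a 0 + ∫ t in (0 : ℝ)..x, a' t)
    (ha_pos : ∀ x ∈ Icc (0 : ℝ) 1, x ≠ x₀ → 0 < a x)
    (hdeg : ∀ᵐ x ∂(volume.restrict (Ioo (0 : ℝ) 1)), (x - x₀) * a' x ≤ K * a x) :
    ∃ c > 0, ∀ x ∈ Icc (0 : ℝ) 1, x ≠ x₀ → c * |x - x₀| ^ K ≤ a x := by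
  set q : ℝ → ℝ := fun y => a y * |y - x₀| ^ (-K)
  have ha_ac : AbsolutelyContinuousOnInterval a 0 1 :=
    absolutelyContinuousOnInterval_of_eq_add_integral
      ((intervalIntegrable_iff_integrableOn_Icc_of_le zero_le_one).2 ha'_int)
      fun x hx => ha_FTC x (by rwa [uIcc_of_le zero_le_one] at hx)
  have hq_ac : ∀ u v, uIcc u v ⊆ Icc 0 1 → x₀ ∉ uIcc u v →
      AbsolutelyContinuousOnInterval q u v := fun u v hsub hu =>
    (ha_ac.mono (by rwa [uIcc_of_le zero_le_one])).fun_mul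
      (absolutelyContinuousOnInterval_abs_sub_rpow hu _)
  have hq' : ∀ᵐ t, t ∈ Ioo 0 1 → t ≠ x₀ → (t - x₀) * deriv q t ≤ 0 := by
    filter_upwards [(ae_restrict_iff' measurableSet_Ioo).1 ha_deriv,
      (ae_restrict_iff' measurableSet_Ioo).1 hdeg] with t hd hdeg ht htx₀
    exact mul_deriv_mul_abs_sub_rpow_nonpos htx₀ (hd ht) (hdeg ht)
  have hq_pos : ∀ x ∈ Icc (0 : ℝ) 1, x ≠ x₀ → 0 < q x := fun x hx hxx₀ =>
    mul_pos (ha_pos x hx hxx₀) (Real.rpow_pos_of_pos (abs_pos.2 (sub_ne_zero.2 hxx₀)) _)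
  refine ⟨min (q 0) (q 1), lt_min (hq_pos 0 (by simp) hx₀.1.ne) (hq_pos 1 (by simp) hx₀.2.ne'),
    fun x hx hxx₀ => ?_⟩
  have hd : 0 < |x - x₀| ^ K := Real.rpow_pos_of_pos (abs_pos.2 (sub_ne_zero.2 hxx₀)) _
  have : min (q 0) (q 1) ≤ a x * |x - x₀| ^ (-K) :=
    min_le_of_ae_mul_deriv_nonpos hq_ac hq' hx hxx₀
  rwa [Real.rpow_neg (abs_nonneg _), ← div_eq_mul_inv, le_div_iff₀ hd] at this

theorem tendsto_abs_sub_rpow_div_of_rpow_le {f : ℝ → ℝ} {s : Set ℝ} {x₀ c K γ : ℝ}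
    (hc : 0 < c) (hγ : K < γ) (hf : ∀ x ∈ s, x ≠ x₀ → c * |x - x₀| ^ K ≤ f x) :
    Tendsto (fun x => |x - x₀| ^ γ / f x) (nhdsWithin x₀ (s \ {x₀})) (nhds 0) := by
  have hbound : ∀ x ∈ s \ {x₀}, |x - x₀| ^ γ / f x ∈ Icc 0 (|x - x₀| ^ (γ - K) / c) := by
    rintro x ⟨hxs, hx⟩
    have hd : 0 < |x - x₀| := abs_pos.2 (sub_ne_zero.2 hx)
    have hlow := hf x hxs hx
    have hfx : 0 < f x := lt_of_lt_of_le (by positivity) hlow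
    refine ⟨by positivity, ?_⟩
    calc |x - x₀| ^ γ / f x ≤ |x - x₀| ^ γ / (c * |x - x₀| ^ K) := by gcongr
      _ = |x - x₀| ^ (γ - K) / c := by rw [Real.rpow_sub hd]; field_simp
  have hlim : Tendsto (fun x => |x - x₀| ^ (γ - K) / c) (nhdsWithin x₀ (s \ {x₀})) (nhds 0) := by
    have hcont : Continuous fun x => |x - x₀| ^ (γ - K) / c :=
      ((continuous_sub_right x₀).abs.rpow_const fun _ => Or.inr (by linarith)).div_const c
    simpa [Real.zero_rpow (by linarith : γ - K ≠ 0)] using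
      (hcont.tendsto x₀).mono_left nhdsWithin_le_nhds
  exact tendsto_of_tendsto_of_tendsto_of_le_of_le' tendsto_const_nhds hlim
    (eventually_nhdsWithin_of_forall fun x hx => (hbound x hx).1)
    (eventually_nhdsWithin_of_forall fun x hx => (hbound x hx).2)

theorem stmt_1_general (x₀ K₁ : ℝ) (hx₀ : x₀ ∈ Ioo (0:ℝ) 1)
    (a a' : ℝ → ℝ)
    (ha_deriv : ∀ᵐ x ∂(volume.restrict (Ioo (0:ℝ) 1)), HasDerivAt a (a' x) x)
    (ha'_int : IntegrableOn a' (Icc 0 1))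
    (ha_FTC : ∀ x ∈ Icc (0:ℝ) 1, a x = a 0 + ∫ t in (0:ℝ)..x, a' t)
    (ha_pos : ∀ x ∈ Icc (0:ℝ) 1, x ≠ x₀ → 0 < a x)
    (hdeg : ∀ᵐ x ∂(volume.restrict (Ioo (0:ℝ) 1)), (x - x₀) * a' x ≤ K₁ * a x) :
    ∀ γ : ℝ, K₁ < γ →
      Tendsto (fun x => |x - x₀| ^ γ / a x) (nhdsWithin x₀ (Icc (0:ℝ) 1 \ {x₀})) (nhds 0) := by
  intro γ hγ
  obtain ⟨c, hc, hlow⟩ := exists_pos_mul_abs_sub_rpow_le hx₀ ha_deriv ha'_int ha_FTC ha_pos hdeg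
  exact tendsto_abs_sub_rpow_div_of_rpow_le hc hγ hlow

/-- Lemma 2.1(1), limit: under the weak degeneracy condition with `K₁ ∈ (0,1)`,
for every `γ > K₁` one has `|x-x₀|^γ / a(x) → 0` as `x → x₀`. -/
theorem stmt_1 (x₀ K₁ : ℝ) (hx₀ : x₀ ∈ Ioo (0:ℝ) 1) (hK₁ : K₁ ∈ Ioo (0:ℝ) 1)
    (a a' : ℝ → ℝ)
    (ha_cont : ContinuousOn a (Icc 0 1))
    (ha_deriv : ∀ᵐ x ∂(volume.restrict (Ioo (0:ℝ) 1)), HasDerivAt a (a' x) x)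
    (ha'_int : IntegrableOn a' (Icc 0 1))
    (ha_FTC : ∀ x ∈ Icc (0:ℝ) 1, a x = a 0 + ∫ t in (0:ℝ)..x, a' t)
    (ha_zero : a x₀ = 0)
    (ha_pos : ∀ x ∈ Icc (0:ℝ) 1, x ≠ x₀ → 0 < a x)
    (hdeg : ∀ᵐ x ∂(volume.restrict (Ioo (0:ℝ) 1)), (x - x₀) * a' x ≤ K₁ * a x) :
    ∀ γ : ℝ, K₁ < γ →
      Tendsto (fun x => |x - x₀| ^ γ / a x) (nhdsWithin x₀ (Icc (0:ℝ) 1 \ {x₀})) (nhds 0) :=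
  stmt_1_general x₀ K₁ hx₀ a a' ha_deriv ha'_int ha_FTC ha_pos hdeg
end

section
/- Let a ∈ W^{1,1}(0,1) with a(x₀)=0 for some x₀ ∈ (0,1), a>0 on [0,1]\{x₀}, and (x−x₀)a'(x) ≤ K₁ a(x) a.e. with K₁ ∈ (0,1). Then 1/a ∈ L¹(0,1). -/
/-!
Near `x₀` the condition `(x - x₀) a' ≤ K₁ a` says that `a(x) |x - x₀|^(-K₁)` decreases as
`x` moves towards `x₀` (in the integral form of Gronwall's lemma, since `a` is only absolutely
continuous). Hence `a(x) ≥ c |x - x₀|^K₁` near `x₀`, and `|x - x₀|^(-K₁)` is integrable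
because `K₁ < 1`. The left side of `x₀` reduces to the right side by the reflection `x ↦ -x`.
-/

open Set MeasureTheory intervalIntegral

theorem le_mul_div_rpow_of_le_add_integral {f : ℝ → ℝ} {p y z K : ℝ} (hpy : p < y)
    (hyz : y ≤ z) (hK : 0 ≤ K) (hf : ContinuousOn f (Icc y z))
    (hineq : ∀ x ∈ Icc y z, f x ≤ f y + K * ∫ t in y..x, f t / (t - p)) :
    f z ≤ f y * ((z - p) / (y - p)) ^ K := by
  have hsub : ∀ x ∈ Icc y z, 0 < x - p := fun x hx => by linarith [hx.1]
  have hg : ContinuousOn (fun t => f t / (t - p)) (Icc y z) :=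
    hf.div (continuousOn_id.sub continuousOn_const) fun x hx => (hsub x hx).ne'
  set u : ℝ → ℝ := fun x => f y + K * ∫ t in y..x, f t / (t - p) with hu
  have hu_cont : ContinuousOn u (Icc y z) := by
    have := continuousOn_primitive_interval' (μ := volume) (hg.intervalIntegrable_of_Icc hyz)
      left_mem_uIcc
    rw [uIcc_of_le hyz] at this
    exact continuousOn_const.add (continuousOn_const.mul this)
  have hu_deriv : ∀ x ∈ Ioo y z, HasDerivAt u (K * (f x / (x - p))) x := fun x hx =>
    have hx_nhds : Icc y z ∈ nhds x := Icc_mem_nhds hx.1 hx.2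
    ((integral_hasDerivAt_right
      ((hg.mono (Icc_subset_Icc_right hx.2.le)).intervalIntegrable_of_Icc hx.1.le)
      ⟨_, hx_nhds, hg.aestronglyMeasurable measurableSet_Icc⟩
      (hg.continuousAt hx_nhds)).const_mul K).const_add (f y)
  have hv_deriv : ∀ x ∈ Ioo y z, HasDerivAt (fun x => u x * (x - p) ^ (-K))
      (K * (x - p) ^ (-K) / (x - p) * (f x - u x)) x := by
    intro x hx
    have hxp := hsub x (Ioo_subset_Icc_self hx)
    refine ((hu_deriv x hx).mul
      (((hasDerivAt_id x).sub_const p).rpow_const (Or.inl hxp.ne'))).congr_deriv ?_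
    rw [id, Real.rpow_sub_one hxp.ne']
    field_simp
    ring
  have hv_anti : AntitoneOn (fun x => u x * (x - p) ^ (-K)) (Icc y z) := by
    refine antitoneOn_of_hasDerivWithinAt_nonpos (convex_Icc y z)
      (hu_cont.mul ((continuousOn_id.sub continuousOn_const).rpow_const
        fun x hx => Or.inl (hsub x hx).ne'))
      (fun x hx => (hv_deriv x (by rwa [interior_Icc] at hx)).hasDerivWithinAt) ?_
    intro x hx
    rw [interior_Icc] at hx
    have hxp := hsub x (Ioo_subset_Icc_self hx)
    exact mul_nonpos_of_nonneg_of_nonpos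
      (div_nonneg (mul_nonneg hK (Real.rpow_nonneg hxp.le _)) hxp.le)
      (sub_nonpos.2 (hineq x (Ioo_subset_Icc_self hx)))
  have hyp := hsub y (left_mem_Icc.2 hyz)
  have hzp := hsub z (right_mem_Icc.2 hyz)
  calc f z ≤ u z := hineq z (right_mem_Icc.2 hyz)
    _ = u z * (z - p) ^ (-K) * (z - p) ^ K := by
        rw [mul_assoc, ← Real.rpow_add hzp, neg_add_cancel, Real.rpow_zero, mul_one]
    _ ≤ u y * (y - p) ^ (-K) * (z - p) ^ K := by
        gcongr ?_ * _
        exact hv_anti (left_mem_Icc.2 hyz) (right_mem_Icc.2 hyz) hyz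
    _ = f y * ((z - p) / (y - p)) ^ K := by
        simp only [hu, integral_same, mul_zero, add_zero]
        rw [Real.div_rpow hzp.le hyp.le, Real.rpow_neg hyp.le]
        ring

theorem intervalIntegrable_one_div_of_weaklyDegenerate_left {a a' : ℝ → ℝ} {p z K : ℝ}
    (hpz : p < z) (hK₀ : 0 ≤ K) (hK₁ : K < 1) (ha : ContinuousOn a (Ioc p z))
    (ha' : IntervalIntegrable a' volume p z)
    (hFTC : ∀ x ∈ Ioc p z, ∀ y ∈ Ioc p z, ∫ t in x..y, a' t = a y - a x)
    (hpos : ∀ x ∈ Ioc p z, 0 < a x)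
    (hdeg : ∀ᵐ t ∂volume.restrict (Ioo p z), (t - p) * a' t ≤ K * a t) :
    IntervalIntegrable (fun x => 1 / a x) volume p z := by
  rw [Measure.restrict_congr_set Ioo_ae_eq_Ioc] at hdeg
  have hlower : ∀ w ∈ Ioc p z, a z ≤ a w * ((z - p) / (w - p)) ^ K := by
    intro w hw
    have hwz : Icc w z ⊆ Ioc p z := Icc_subset_Ioc_iff hw.2 |>.2 ⟨hw.1, le_rfl⟩
    refine le_mul_div_rpow_of_le_add_integral hw.1 hw.2 hK₀ (ha.mono hwz) fun x hx => ?_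
    have hwx : Icc w x ⊆ Ioc p z := (Icc_subset_Icc_right hx.2).trans hwz
    have hdiv : ContinuousOn (fun t => a t / (t - p)) (Icc w x) :=
      (ha.mono hwx).div (continuousOn_id.sub continuousOn_const)
        fun t ht => (sub_pos.2 (hwx ht).1).ne'
    have hmono : ∫ t in w..x, a' t ≤ ∫ t in w..x, K * (a t / (t - p)) := by
      refine integral_mono_ae_restrict hx.1 (ha'.mono_set ?_)
        ((hdiv.const_mul K).intervalIntegrable_of_Icc hx.1) ?_
      · rw [uIcc_of_le hx.1, uIcc_of_le hpz.le]
        exact hwx.trans Ioc_subset_Icc_self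
      filter_upwards [ae_restrict_of_ae_restrict_of_subset hwx hdeg,
        ae_restrict_mem measurableSet_Icc] with t ht htwx
      rw [← mul_div_assoc, le_div_iff₀ (sub_pos.2 (hwx htwx).1)]
      linarith
    rw [intervalIntegral.integral_const_mul] at hmono
    linarith [hFTC w (hwz (left_mem_Icc.2 hw.2)) x (hwz hx)]
  have hsing : IntervalIntegrable (fun w => (w - p) ^ (-K)) volume p z := by
    simpa using (intervalIntegrable_rpow' (a := 0) (b := z - p) (by linarith)).comp_sub_right p
  refine (hsing.const_mul ((z - p) ^ K / a z)).mono_fun' ?_ ?_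
  · rw [uIoc_of_le hpz.le]
    exact (continuousOn_const.div ha fun x hx => (hpos x hx).ne').aestronglyMeasurable
      measurableSet_Ioc
  rw [uIoc_of_le hpz.le]
  filter_upwards [ae_restrict_mem measurableSet_Ioc] with w hw
  have hwp : 0 < w - p := sub_pos.2 hw.1
  have haz := hpos z (right_mem_Ioc.2 hpz)
  have haw := hpos w hw
  rw [Real.norm_of_nonneg (by positivity), div_le_iff₀ haw]
  calc (1 : ℝ) ≤ a w * ((z - p) / (w - p)) ^ K / a z := (one_le_div haz).2 (hlower w hw)
    _ = (z - p) ^ K / a z * (w - p) ^ (-K) * a w := by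
      rw [Real.div_rpow (sub_pos.2 hpz).le hwp.le, Real.rpow_neg hwp.le]
      ring

theorem intervalIntegrable_one_div_of_weaklyDegenerate_right {a a' : ℝ → ℝ} {q p K : ℝ}
    (hqp : q < p) (hK₀ : 0 ≤ K) (hK₁ : K < 1) (ha : ContinuousOn a (Ico q p))
    (ha' : IntervalIntegrable a' volume q p)
    (hFTC : ∀ x ∈ Ico q p, ∀ y ∈ Ico q p, ∫ t in x..y, a' t = a y - a x)
    (hpos : ∀ x ∈ Ico q p, 0 < a x)
    (hdeg : ∀ᵐ t ∂volume.restrict (Ioo q p), (t - p) * a' t ≤ K * a t) :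
    IntervalIntegrable (fun x => 1 / a x) volume q p := by
  have hneg : ∀ x ∈ Ioc (-p) (-q), -x ∈ Ico q p := fun x hx =>
    ⟨le_neg_of_le_neg hx.2, neg_lt_of_neg_lt hx.1⟩
  have := intervalIntegrable_one_div_of_weaklyDegenerate_left (a := fun s => a (-s))
    (a' := fun s => -a' (-s)) (neg_lt_neg hqp) hK₀ hK₁ (ha.comp continuousOn_neg hneg)
    (((IntervalIntegrable.iff_comp_neg (f := a')).1 ha').neg.symm)
    (fun x hx y hy => by
      rw [intervalIntegral.integral_neg, intervalIntegral.integral_comp_neg (a' ·),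
        hFTC _ (hneg y hy) _ (hneg x hx)]
      ring)
    (fun x hx => hpos _ (hneg x hx)) ?_
  · simpa using (IntervalIntegrable.iff_comp_neg (f := fun x => 1 / a x)).2 this.symm
  rw [ae_restrict_iff' measurableSet_Ioo] at hdeg ⊢
  filter_upwards [(Measure.measurePreserving_neg volume).quasiMeasurePreserving.ae hdeg]
    with t ht htI
  have := ht ⟨lt_neg_of_lt_neg htI.2, neg_lt_of_neg_lt htI.1⟩
  linarith

theorem stmt_2_general (x₀ K₁ : ℝ) (hx₀ : x₀ ∈ Ioo (0:ℝ) 1) (hK₁ : K₁ ∈ Ioo (0:ℝ) 1)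
    (a a' : ℝ → ℝ)
    (ha_cont : ContinuousOn a (Icc 0 1))
    (ha'_int : IntegrableOn a' (Icc 0 1))
    (ha_FTC : ∀ x ∈ Icc (0:ℝ) 1, a x = a 0 + ∫ t in (0:ℝ)..x, a' t)
    (ha_pos : ∀ x ∈ Icc (0:ℝ) 1, x ≠ x₀ → 0 < a x)
    (hdeg : ∀ᵐ x ∂(volume.restrict (Ioo (0:ℝ) 1)), (x - x₀) * a' x ≤ K₁ * a x) :
    IntegrableOn (fun x => 1 / a x) (Ioo (0:ℝ) 1) := by
  have ha' : ∀ x ∈ Icc (0:ℝ) 1, ∀ y ∈ Icc (0:ℝ) 1, IntervalIntegrable a' volume x y :=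
    fun x hx y hy => (ha'_int.mono_set (uIcc_subset_Icc hx hy)).intervalIntegrable
  have hFTC : ∀ x ∈ Icc (0:ℝ) 1, ∀ y ∈ Icc (0:ℝ) 1, ∫ t in x..y, a' t = a y - a x := by
    intro x hx y hy
    have h0 : (0:ℝ) ∈ Icc (0:ℝ) 1 := ⟨le_rfl, zero_le_one⟩
    rw [ha_FTC x hx, ha_FTC y hy,
      ← integral_interval_sub_left (ha' 0 h0 y hy) (ha' 0 h0 x hx)]
    ring
  have hIco : Ico 0 x₀ ⊆ Icc (0:ℝ) 1 :=
    Ico_subset_Icc_self.trans (Icc_subset_Icc_right hx₀.2.le)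
  have hIoc : Ioc x₀ 1 ⊆ Icc (0:ℝ) 1 :=
    Ioc_subset_Icc_self.trans (Icc_subset_Icc_left hx₀.1.le)
  have h0x₀ := intervalIntegrable_one_div_of_weaklyDegenerate_right hx₀.1 hK₁.1.le hK₁.2
    (ha_cont.mono hIco) (ha' 0 (hIco (left_mem_Ico.2 hx₀.1)) x₀ (Ioo_subset_Icc_self hx₀))
    (fun x hx y hy => hFTC x (hIco hx) y (hIco hy)) (fun x hx => ha_pos x (hIco hx) hx.2.ne)
    (ae_restrict_of_ae_restrict_of_subset (Ioo_subset_Ioo_right hx₀.2.le) hdeg)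
  have hx₀1 := intervalIntegrable_one_div_of_weaklyDegenerate_left hx₀.2 hK₁.1.le hK₁.2
    (ha_cont.mono hIoc) (ha' x₀ (Ioo_subset_Icc_self hx₀) 1 (hIoc (right_mem_Ioc.2 hx₀.2)))
    (fun x hx y hy => hFTC x (hIoc hx) y (hIoc hy)) (fun x hx => ha_pos x (hIoc hx) hx.1.ne')
    (ae_restrict_of_ae_restrict_of_subset (Ioo_subset_Ioo_left hx₀.1.le) hdeg)
  exact (intervalIntegrable_iff_integrableOn_Ioo_of_le zero_le_one).1 (h0x₀.trans hx₀1)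

/-- Lemma 2.1(2): under the weak degeneracy condition with `K₁ ∈ (0,1)`,
`1/a ∈ L¹(0,1)`. -/
theorem stmt_2 (x₀ K₁ : ℝ) (hx₀ : x₀ ∈ Ioo (0:ℝ) 1) (hK₁ : K₁ ∈ Ioo (0:ℝ) 1)
    (a a' : ℝ → ℝ)
    (ha_cont : ContinuousOn a (Icc 0 1))
    (ha_deriv : ∀ᵐ x ∂(volume.restrict (Ioo (0:ℝ) 1)), HasDerivAt a (a' x) x)
    (ha'_int : IntegrableOn a' (Icc 0 1))
    (ha_FTC : ∀ x ∈ Icc (0:ℝ) 1, a x = a 0 + ∫ t in (0:ℝ)..x, a' t)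
    (ha_zero : a x₀ = 0)
    (ha_pos : ∀ x ∈ Icc (0:ℝ) 1, x ≠ x₀ → 0 < a x)
    (hdeg : ∀ᵐ x ∂(volume.restrict (Ioo (0:ℝ) 1)), (x - x₀) * a' x ≤ K₁ * a x) :
    IntegrableOn (fun x => 1 / a x) (Ioo (0:ℝ) 1) :=
  stmt_2_general x₀ K₁ hx₀ hK₁ a a' ha_cont ha'_int ha_FTC ha_pos hdeg
end

section
/- Let p ∈ C([0,1]) with p > 0 on [0,1]\{x₀}, p(x₀)=0, and suppose there exists q > 1 such that x ↦ p(x)/|x−x₀|^q is non-increasing on [0,x₀) and non-decreasing on (x₀,1]. Then there exists a constant C > 0 such that for every function w, locally absolutely continuous on [0,x₀)∪(x₀,1] with w(0)=w(1)=0 and ∫₀¹ p |w'|² dx < ∞, one has ∫₀¹ p(x) w(x)²/(x−x₀)² dx ≤ C ∫₀¹ p(x) |w'(x)|² dx. -/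
/-!
Right of `x₀`, put `φ = p / (x - x₀)²` and `F(x) = ∫_a^x φ` for `x₀ < a`. Writing
`φ(t) = (p(t) / (t - x₀)^q) (t - x₀)^(q-2)`, where the first factor is non-decreasing,
gives `F(x) ≤ p(x) / ((q - 1)(x - x₀))`, i.e. `4 F² ≤ (2 / (q - 1))² φ p`. Integrating
`(F w²)' = φ w² + 2 F w w'` over `[a, b]`, where the boundary terms vanish because
`F a = 0 = w b`, and bounding `2 |F w w'|` by Young's inequality yields
`∫_a^b φ w² ≤ (2 / (q - 1))² ∫_a^b p w'²`. Letting `a ↓ x₀` gives the inequality on `(x₀, b)`;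
the left half follows by the reflection `x ↦ -x`, and `C = (2 / (q - 1))²`.
-/

open Set MeasureTheory Filter Topology

theorem abs_mul_two_mul_mul_le {F φ p u v c : ℝ} (hφ : 0 ≤ φ) (hp : 0 ≤ p)
    (hF : 4 * F ^ 2 ≤ c ^ 2 * φ * p) :
    |F * (2 * u * v)| ≤ 1 / 2 * (φ * u ^ 2) + c ^ 2 / 2 * (p * v ^ 2) := by
  refine abs_le_of_sq_le_sq ?_ (by positivity)
  have := mul_le_mul_of_nonneg_right hF (sq_nonneg (u * v))
  nlinarith [sq_nonneg (φ * u ^ 2 - c ^ 2 * (p * v ^ 2))]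

section

variable {φ p w w' : ℝ → ℝ} {x₀ a b c q : ℝ}

theorem integral_mul_sq_le_of_sq_primitive_le (hab : a ≤ b)
    (hφc : ContinuousOn φ (Icc a b)) (hφ : ∀ x ∈ Ioo a b, 0 ≤ φ x)
    (hp : ∀ x ∈ Ioo a b, 0 ≤ p x)
    (hwc : ContinuousOn w (Icc a b)) (hw : ∀ x ∈ Ioo a b, HasDerivAt w (w' x) x) (hwb : w b = 0)
    (hJ : IntervalIntegrable (fun x => p x * w' x ^ 2) volume a b)
    (hF : ∀ x ∈ Ioo a b, 4 * (∫ t in a..x, φ t) ^ 2 ≤ c ^ 2 * φ x * p x) :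
    ∫ x in a..b, φ x * w x ^ 2 ≤ c ^ 2 * ∫ x in a..b, p x * w' x ^ 2 := by
  set F : ℝ → ℝ := fun x => ∫ t in a..x, φ t
  have hFc : ContinuousOn F (Icc a b) := by
    simpa [uIcc_of_le hab] using intervalIntegral.continuousOn_primitive_interval
      (hφc.integrableOn_Icc.mono_set (uIcc_of_le hab).subset)
  have hF' : ∀ x ∈ Ioo a b, HasDerivAt F (φ x) x := fun x hx =>
    intervalIntegral.integral_hasDerivAt_right
      ((hφc.mono (Icc_subset_Icc le_rfl hx.2.le)).intervalIntegrable_of_Icc hx.1.le)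
      ((hφc.mono Ioo_subset_Icc_self).stronglyMeasurableAtFilter isOpen_Ioo x hx)
      (hφc.continuousAt (Icc_mem_nhds hx.1 hx.2))
  have hφw : IntervalIntegrable (fun x => φ x * w x ^ 2) volume a b :=
    (hφc.mul (hwc.pow 2)).intervalIntegrable_of_Icc hab
  have hyoung : ∀ x ∈ Ioo a b,
      |F x * (2 * w x * w' x)| ≤ 1 / 2 * (φ x * w x ^ 2) + c ^ 2 / 2 * (p x * w' x ^ 2) :=
    fun x hx => abs_mul_two_mul_mul_le (hφ x hx) (hp x hx) (hF x hx)
  have hbound : IntervalIntegrable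
      (fun x => 1 / 2 * (φ x * w x ^ 2) + c ^ 2 / 2 * (p x * w' x ^ 2)) volume a b :=
    (hφw.const_mul _).add (hJ.const_mul _)
  have hFw : IntervalIntegrable (fun x => F x * (2 * w x * w' x)) volume a b := by
    rw [intervalIntegrable_iff_integrableOn_Ioo_of_le hab] at hbound ⊢
    have hw' : AEStronglyMeasurable w' (volume.restrict (Ioo a b)) :=
      (stronglyMeasurable_deriv w).aestronglyMeasurable.congr
        (ae_restrict_of_forall_mem measurableSet_Ioo fun x hx => (hw x hx).deriv)
    refine hbound.mono' ?_ (ae_restrict_of_forall_mem measurableSet_Ioo hyoung)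
    have hwm : AEStronglyMeasurable w (volume.restrict (Ioo a b)) :=
      (hwc.mono Ioo_subset_Icc_self).aestronglyMeasurable measurableSet_Ioo
    exact ((hFc.mono Ioo_subset_Icc_self).aestronglyMeasurable measurableSet_Ioo).mul
      ((hwm.const_mul 2).mul hw')
  have hprod : ∀ x ∈ Ioo a b, HasDerivAt (fun x => F x * w x ^ 2)
      (φ x * w x ^ 2 + F x * (2 * w x * w' x)) x := fun x hx =>
    ((hF' x hx).fun_mul ((hw x hx).fun_pow 2)).congr_deriv (by push_cast; ring)
  have hparts : ∫ x in a..b, φ x * w x ^ 2 = -∫ x in a..b, F x * (2 * w x * w' x) := by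
    have := intervalIntegral.integral_eq_sub_of_hasDerivAt_of_le
      (f := fun x => F x * w x ^ 2) hab (hFc.mul (hwc.pow 2)) hprod (hφw.add hFw)
    rw [intervalIntegral.integral_add hφw hFw, hwb, show F a = 0 from
      intervalIntegral.integral_same] at this
    linarith
  have hle : -∫ x in a..b, F x * (2 * w x * w' x) ≤
      ∫ x in a..b, (1 / 2 * (φ x * w x ^ 2) + c ^ 2 / 2 * (p x * w' x ^ 2)) := by
    rw [← intervalIntegral.integral_neg]
    exact intervalIntegral.integral_mono_on_of_le_Ioo hab hFw.neg hbound
      fun x hx => (neg_le_abs _).trans (hyoung x hx)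
  rw [intervalIntegral.integral_add (hφw.const_mul _) (hJ.const_mul _),
    intervalIntegral.integral_const_mul, intervalIntegral.integral_const_mul, ← hparts] at hle
  linarith

theorem integral_div_sq_le_of_monotoneOn {x : ℝ} (hq : 1 < q) (ha : x₀ < a) (hax : a ≤ x)
    (hpc : ContinuousOn p (Icc a x)) (hpx : 0 ≤ p x)
    (hg : MonotoneOn (fun t => p t / |t - x₀| ^ q) (Icc a x)) :
    ∫ t in a..x, p t / (t - x₀) ^ 2 ≤ p x / ((q - 1) * (x - x₀)) := by
  have hpos : ∀ t ∈ Icc a x, 0 < t - x₀ := fun t ht => by linarith [ht.1]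
  have hxpos := hpos x (right_mem_Icc.2 hax)
  set G := p x / (x - x₀) ^ q
  have hpt : ∀ t ∈ Icc a x, p t / (t - x₀) ^ 2 ≤ G * (t - x₀) ^ (q - 2) := by
    intro t ht
    have htpos := hpos t ht
    have hgt := hg ht (right_mem_Icc.2 hax) ht.2
    simp only [abs_of_pos htpos, abs_of_pos hxpos] at hgt
    calc p t / (t - x₀) ^ 2 = p t / (t - x₀) ^ q * (t - x₀) ^ (q - 2) := by
          rw [show q - 2 = q - (2 : ℕ) by norm_num, Real.rpow_sub_natCast htpos.ne']
          field_simp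
      _ ≤ G * (t - x₀) ^ (q - 2) := by gcongr
  have hcont : ContinuousOn (fun t => (t - x₀) ^ (q - 2)) (Icc a x) :=
    ContinuousOn.rpow_const (by fun_prop) fun t ht => Or.inl (hpos t ht).ne'
  have hprim : ∫ t in a..x, (t - x₀) ^ (q - 2) =
      ((x - x₀) ^ (q - 1) - (a - x₀) ^ (q - 1)) / (q - 1) := by
    rw [intervalIntegral.integral_comp_sub_right (fun u => u ^ (q - 2)),
      integral_rpow (Or.inl (by linarith))]
    ring_nf
  calc ∫ t in a..x, p t / (t - x₀) ^ 2 ≤ ∫ t in a..x, G * (t - x₀) ^ (q - 2) :=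
        intervalIntegral.integral_mono_on hax
          ((hpc.div (by fun_prop) fun t ht => (pow_pos (hpos t ht) 2).ne').intervalIntegrable_of_Icc
            hax)
          ((hcont.const_mul G).intervalIntegrable_of_Icc hax) hpt
    _ = G * (((x - x₀) ^ (q - 1) - (a - x₀) ^ (q - 1)) / (q - 1)) := by
        rw [intervalIntegral.integral_const_mul, hprim]
    _ ≤ G * ((x - x₀) ^ (q - 1) / (q - 1)) := by
        have : 0 ≤ (a - x₀) ^ (q - 1) := Real.rpow_nonneg (by linarith) _
        gcongr
        linarith
    _ = p x / ((q - 1) * (x - x₀)) := by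
        have : (x - x₀) ^ q ≠ 0 := (Real.rpow_pos_of_pos hxpos q).ne'
        rw [Real.rpow_sub_one hxpos.ne']
        simp only [G]
        field_simp

theorem weighted_hardy_of_lt (hxa : x₀ < a) (hab : a ≤ b) (hq : 1 < q)
    (hpc : ContinuousOn p (Icc a b)) (hp : ∀ x ∈ Icc a b, 0 ≤ p x)
    (hg : MonotoneOn (fun x => p x / |x - x₀| ^ q) (Icc a b))
    (hw : ∀ x ∈ Icc a b, HasDerivAt w (w' x) x) (hwb : w b = 0)
    (hJ : IntervalIntegrable (fun x => p x * w' x ^ 2) volume a b) :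
    ∫ x in a..b, p x * w x ^ 2 / (x - x₀) ^ 2 ≤
      (2 / (q - 1)) ^ 2 * ∫ x in a..b, p x * w' x ^ 2 := by
  have hpos : ∀ x ∈ Icc a b, 0 < x - x₀ := fun x hx => by linarith [hx.1]
  have hφc : ContinuousOn (fun x => p x / (x - x₀) ^ 2) (Icc a b) :=
    hpc.div (by fun_prop) fun x hx => (pow_pos (hpos x hx) 2).ne'
  have hφ : ∀ x ∈ Icc a b, 0 ≤ p x / (x - x₀) ^ 2 := fun x hx =>
    div_nonneg (hp x hx) (sq_nonneg _)
  simp_rw [← div_mul_eq_mul_div]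
  refine integral_mul_sq_le_of_sq_primitive_le hab hφc
    (fun x hx => hφ x (Ioo_subset_Icc_self hx)) (fun x hx => hp x (Ioo_subset_Icc_self hx))
    (fun x hx => (hw x hx).continuousAt.continuousWithinAt)
    (fun x hx => hw x (Ioo_subset_Icc_self hx)) hwb hJ fun x hx => ?_
  have hxI : Icc a x ⊆ Icc a b := Icc_subset_Icc le_rfl hx.2.le
  have hF0 : 0 ≤ ∫ t in a..x, p t / (t - x₀) ^ 2 :=
    intervalIntegral.integral_nonneg hx.1.le fun t ht => hφ t (hxI ht)
  have hF := integral_div_sq_le_of_monotoneOn hq hxa hx.1.le (hpc.mono hxI)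
    (hp x (Ioo_subset_Icc_self hx)) (hg.mono hxI)
  have hq1 : (0 : ℝ) < q - 1 := by linarith
  have hx₀ := hpos x (Ioo_subset_Icc_self hx)
  calc 4 * (∫ t in a..x, p t / (t - x₀) ^ 2) ^ 2
        ≤ 4 * (p x / ((q - 1) * (x - x₀))) ^ 2 := by gcongr
    _ = (2 / (q - 1)) ^ 2 * (p x / (x - x₀) ^ 2) * p x := by
        field_simp
        ring

theorem intervalIntegrable_and_integral_le_of_forall_left {f : ℝ → ℝ} {K : ℝ} (hab : a < b)
    (hf : ∀ x ∈ Ioc a b, 0 ≤ f x) (hfi : ∀ c ∈ Ioo a b, IntervalIntegrable f volume c b)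
    (hK : ∀ c ∈ Ioo a b, ∫ x in c..b, f x ≤ K) :
    IntervalIntegrable f volume a b ∧ ∫ x in a..b, f x ≤ K := by
  let l := comap ((↑) : Ioo a b → ℝ) (𝓝[>] a)
  have hl : l.NeBot := NeBot.comap_of_range_mem inferInstance
    (by rw [Subtype.range_coe]; exact Ioo_mem_nhdsGT hab)
  have hint : IntegrableOn f (Ioc a b) := by
    refine integrableOn_Ioc_of_intervalIntegral_norm_bounded_left (l := l) (a := (↑)) (I := K)
      (fun c => (intervalIntegrable_iff_integrableOn_Ioc_of_le c.2.2.le).1 (hfi c c.2))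
      (tendsto_comap.mono_right nhdsWithin_le_nhds) (Eventually.of_forall fun c => ?_)
    rw [← intervalIntegral.integral_of_le c.2.2.le]
    refine le_of_eq_of_le (intervalIntegral.integral_congr fun x hx => ?_) (hK c c.2)
    rw [uIcc_of_le c.2.2.le] at hx
    exact Real.norm_of_nonneg (hf x ⟨c.2.1.trans_le hx.1, hx.2⟩)
  have hfi_ab : IntervalIntegrable f volume a b :=
    (intervalIntegrable_iff_integrableOn_Ioc_of_le hab.le).2 hint
  have hcont := intervalIntegral.continuousOn_primitive_interval_left (b := b)
    (((intervalIntegrable_iff_integrableOn_Icc_of_le hab.le).1 hfi_ab).mono_set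
      (uIcc_of_le hab.le).subset)
  have htend : Tendsto (fun c => ∫ x in c..b, f x) (𝓝[>] a) (𝓝 (∫ x in a..b, f x)) := by
    rw [← nhdsWithin_Ioo_eq_nhdsGT hab]
    exact (hcont a left_mem_uIcc).mono (Ioo_subset_Icc_self.trans (uIcc_of_le hab.le).symm.subset)
  exact ⟨hfi_ab, le_of_tendsto htend (eventually_of_mem (Ioo_mem_nhdsGT hab) hK)⟩

theorem weighted_hardy_right (hxb : x₀ < b) (hq : 1 < q)
    (hpc : ContinuousOn p (Ioc x₀ b)) (hp : ∀ x ∈ Ioc x₀ b, 0 ≤ p x)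
    (hg : MonotoneOn (fun x => p x / |x - x₀| ^ q) (Ioc x₀ b))
    (hw : ∀ x ∈ Ioc x₀ b, HasDerivAt w (w' x) x) (hwb : w b = 0)
    (hJ : IntervalIntegrable (fun x => p x * w' x ^ 2) volume x₀ b) :
    IntervalIntegrable (fun x => p x * w x ^ 2 / (x - x₀) ^ 2) volume x₀ b ∧
      ∫ x in x₀..b, p x * w x ^ 2 / (x - x₀) ^ 2 ≤
        (2 / (q - 1)) ^ 2 * ∫ x in x₀..b, p x * w' x ^ 2 := by
  refine intervalIntegrable_and_integral_le_of_forall_left hxb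
    (fun x hx => div_nonneg (mul_nonneg (hp x hx) (sq_nonneg _)) (sq_nonneg _))
    (fun a ha => ?_) fun a ha => ?_
  all_goals have hsub : Icc a b ⊆ Ioc x₀ b := Icc_subset_Ioc_iff ha.2.le |>.2 ⟨ha.1, le_rfl⟩
  · refine ContinuousOn.intervalIntegrable_of_Icc ha.2.le ?_
    refine ((hpc.mono hsub).mul (ContinuousOn.pow (fun x hx => ?_) 2)).div (by fun_prop)
      fun x hx => (pow_pos (sub_pos.2 (hsub hx).1) 2).ne'
    exact (hw x (hsub hx)).continuousAt.continuousWithinAt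
  · calc ∫ x in a..b, p x * w x ^ 2 / (x - x₀) ^ 2
          ≤ (2 / (q - 1)) ^ 2 * ∫ x in a..b, p x * w' x ^ 2 :=
          weighted_hardy_of_lt ha.1 ha.2.le hq (hpc.mono hsub) (fun x hx => hp x (hsub hx))
            (hg.mono hsub) (fun x hx => hw x (hsub hx)) hwb
            (hJ.mono_set (uIcc_subset_uIcc_right (mem_uIcc_of_le ha.1.le ha.2.le)))
      _ ≤ (2 / (q - 1)) ^ 2 * ∫ x in x₀..b, p x * w' x ^ 2 := by
          gcongr
          exact intervalIntegral.integral_mono_interval ha.1.le ha.2.le le_rfl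
            (ae_restrict_of_forall_mem measurableSet_Ioc fun x hx =>
              mul_nonneg (hp x hx) (sq_nonneg _)) hJ

theorem weighted_hardy_left (hax : a < x₀) (hq : 1 < q)
    (hpc : ContinuousOn p (Ico a x₀)) (hp : ∀ x ∈ Ico a x₀, 0 ≤ p x)
    (hg : AntitoneOn (fun x => p x / |x - x₀| ^ q) (Ico a x₀))
    (hw : ∀ x ∈ Ico a x₀, HasDerivAt w (w' x) x) (hwa : w a = 0)
    (hJ : IntervalIntegrable (fun x => p x * w' x ^ 2) volume a x₀) :
    IntervalIntegrable (fun x => p x * w x ^ 2 / (x - x₀) ^ 2) volume a x₀ ∧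
      ∫ x in a..x₀, p x * w x ^ 2 / (x - x₀) ^ 2 ≤
        (2 / (q - 1)) ^ 2 * ∫ x in a..x₀, p x * w' x ^ 2 := by
  have hneg : MapsTo Neg.neg (Ioc (-x₀) (-a)) (Ico a x₀) := fun x hx =>
    ⟨le_neg_of_le_neg hx.2, neg_lt.1 hx.1⟩
  have h := weighted_hardy_right (x₀ := -x₀) (b := -a) (p := fun x => p (-x))
    (w := fun x => w (-x)) (w' := fun x => -w' (-x)) (neg_lt_neg hax) hq
    (hpc.comp continuous_neg.continuousOn hneg) (fun x hx => hp _ (hneg hx))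
    (fun u hu v hv huv => ?_) (fun x hx => ?_) (by simpa using hwa) ?_
  · have e : ∀ x : ℝ, (-x - x₀) ^ 2 = (x - -x₀) ^ 2 := fun x => by ring
    simp only [← e, neg_sq] at h
    rw [intervalIntegral.integral_comp_neg (fun x => p x * w x ^ 2 / (x - x₀) ^ 2),
      intervalIntegral.integral_comp_neg (fun x => p x * w' x ^ 2), neg_neg, neg_neg] at h
    exact ⟨(IntervalIntegrable.iff_comp_neg (by finiteness)).2 h.1.symm, h.2⟩
  · simpa [abs_sub_comm, sub_neg_eq_add, add_comm] using hg (hneg hv) (hneg hu) (neg_le_neg huv)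
  · simpa [Function.comp_def] using (hw (-x) (hneg hx)).comp x (hasDerivAt_neg x)
  · simpa only [neg_sq] using ((IntervalIntegrable.iff_comp_neg (by finiteness)).1 hJ).symm

end

theorem stmt_4_general (x₀ : ℝ) (hx₀ : x₀ ∈ Ioo (0:ℝ) 1)
    (p : ℝ → ℝ)
    (hp_cont : ContinuousOn p (Icc 0 1))
    (hp_pos : ∀ x ∈ Icc (0:ℝ) 1, x ≠ x₀ → 0 < p x)
    (hq : ∃ q : ℝ, 1 < q ∧
      AntitoneOn (fun x => p x / |x - x₀| ^ q) (Ico (0:ℝ) x₀) ∧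
      MonotoneOn (fun x => p x / |x - x₀| ^ q) (Ioc x₀ 1)) :
    ∃ C : ℝ, 0 < C ∧ ∀ w w' : ℝ → ℝ,
      (∀ x ∈ Icc (0:ℝ) 1 \ {x₀}, HasDerivAt w (w' x) x) →
      w 0 = 0 → w 1 = 0 →
      IntegrableOn (fun x => p x * (w' x) ^ 2) (Ioo (0:ℝ) 1) →
      ∫ x in Ioo (0:ℝ) 1, p x * (w x) ^ 2 / (x - x₀) ^ 2 ≤
        C * ∫ x in Ioo (0:ℝ) 1, p x * (w' x) ^ 2 := by
  obtain ⟨q, hq, hanti, hmono⟩ := hq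
  obtain ⟨h0, h1⟩ := hx₀
  refine ⟨(2 / (q - 1)) ^ 2, pow_pos (div_pos two_pos (sub_pos.2 hq)) 2,
    fun w w' hw hw0 hw1 hJ => ?_⟩
  have hJ' := (intervalIntegrable_iff_integrableOn_Ioo_of_le zero_le_one).2 hJ
  have hJL := hJ'.mono_set (uIcc_subset_uIcc_left (mem_uIcc_of_le h0.le h1.le))
  have hJR := hJ'.mono_set (uIcc_subset_uIcc_right (mem_uIcc_of_le h0.le h1.le))
  have hIco : Ico 0 x₀ ⊆ Icc (0:ℝ) 1 \ {x₀} := fun x hx => ⟨⟨hx.1, hx.2.le.trans h1.le⟩, hx.2.ne⟩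
  have hIoc : Ioc x₀ 1 ⊆ Icc (0:ℝ) 1 \ {x₀} := fun x hx => ⟨⟨h0.le.trans hx.1.le, hx.2⟩, hx.1.ne'⟩
  obtain ⟨hL, hLle⟩ := weighted_hardy_left h0 hq (hp_cont.mono fun x hx => (hIco hx).1)
    (fun x hx => (hp_pos x (hIco hx).1 (hIco hx).2).le) hanti (fun x hx => hw x (hIco hx))
    hw0 hJL
  obtain ⟨hR, hRle⟩ := weighted_hardy_right h1 hq (hp_cont.mono fun x hx => (hIoc hx).1)
    (fun x hx => (hp_pos x (hIoc hx).1 (hIoc hx).2).le) hmono (fun x hx => hw x (hIoc hx))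
    hw1 hJR
  simp only [← integral_Ioc_eq_integral_Ioo, ← intervalIntegral.integral_of_le zero_le_one]
  rw [← intervalIntegral.integral_add_adjacent_intervals hL hR,
    ← intervalIntegral.integral_add_adjacent_intervals hJL hJR, mul_add]
  exact add_le_add hLle hRle

/-- Proposition 2.2 (weighted Hardy–Poincaré inequality with interior zero of the weight):
if `p` is continuous on `[0,1]`, positive away from `x₀`, `p(x₀)=0`, and `p(x)/|x-x₀|^q`
is non-increasing left of `x₀` and non-decreasing right of `x₀` for some `q > 1`, then
there is `C > 0` such that every `w` which is (locally absolutely continuous, encoded by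
a derivative `w'` on `[0,1]∖{x₀}`) with `w 0 = w 1 = 0` and `∫ p (w')² < ∞` satisfies
`∫ p w²/(x-x₀)² ≤ C ∫ p (w')²`. -/
theorem stmt_4 (x₀ : ℝ) (hx₀ : x₀ ∈ Ioo (0:ℝ) 1)
    (p : ℝ → ℝ)
    (hp_cont : ContinuousOn p (Icc 0 1))
    (hp_pos : ∀ x ∈ Icc (0:ℝ) 1, x ≠ x₀ → 0 < p x)
    (hp_zero : p x₀ = 0)
    (hq : ∃ q : ℝ, 1 < q ∧
      AntitoneOn (fun x => p x / |x - x₀| ^ q) (Ico (0:ℝ) x₀) ∧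
      MonotoneOn (fun x => p x / |x - x₀| ^ q) (Ioc x₀ 1)) :
    ∃ C : ℝ, 0 < C ∧ ∀ w w' : ℝ → ℝ,
      (∀ x ∈ Icc (0:ℝ) 1 \ {x₀}, HasDerivAt w (w' x) x) →
      w 0 = 0 → w 1 = 0 →
      IntegrableOn (fun x => p x * (w' x) ^ 2) (Ioo (0:ℝ) 1) →
      ∫ x in Ioo (0:ℝ) 1, p x * (w x) ^ 2 / (x - x₀) ^ 2 ≤
        C * ∫ x in Ioo (0:ℝ) 1, p x * (w' x) ^ 2 :=
  stmt_4_general x₀ hx₀ p hp_cont hp_pos hq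
end

section
/- Let x₀ ∈ (0,1) and b ∈ W^{1,∞}(0,1) with b(x₀)=0, b>0 on [0,1]\{x₀}, and (x−x₀)b'(x) ≤ K₂ b(x) a.e. with K₂ ≥ 1. If u ∈ W^{1,1}₀(0,1) satisfies ∫₀¹ u²/b dx < ∞, then u(x₀) = 0. -/
open Set MeasureTheory Filter Topology Asymptotics

/-! A Lipschitz `b` vanishing at `x₀` satisfies `b = O(x - x₀)`. If `u x₀ ≠ 0`, then `u²` stays
away from zero near `x₀`, so `(x - x₀)⁻¹ = O(u² / b)` on a punctured neighbourhood of `x₀`; since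
`(x - x₀)⁻¹` is not integrable across `x₀`, neither is `u² / b`. -/

theorem LipschitzOnWith.isBigO_sub_of_eq_zero {E F : Type*} [SeminormedAddCommGroup E]
    [SeminormedAddCommGroup F] {f : E → F} {s : Set E} {K : NNReal} {a : E}
    (hf : LipschitzOnWith K f s) (hs : s ∈ 𝓝 a) (ha : f a = 0) :
    f =O[𝓝 a] fun x => x - a := by
  refine IsBigO.of_bound K ?_
  filter_upwards [hs] with x hx
  simpa [dist_eq_norm, ha] using hf.dist_le_mul x hx a (mem_of_mem_nhds hs)

theorem one_isBigO_sq_of_continuousAt {u : ℝ → ℝ} {a : ℝ} (hu : ContinuousAt u a)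
    (hua : u a ≠ 0) : (fun _ => (1 : ℝ)) =O[𝓝 a] fun x => u x ^ 2 := by
  have hpos : 0 < ‖u a ^ 2‖ := norm_pos_iff.2 (pow_ne_zero 2 hua)
  refine (isBigO_const_left_iff_pos_le_norm one_ne_zero).2 ⟨‖u a ^ 2‖ / 2, by positivity, ?_⟩
  exact ((hu.pow 2).norm.eventually (lt_mem_nhds (half_lt_self hpos))).mono fun _ => le_of_lt

theorem sub_inv_isBigO_sq_div {b u : ℝ → ℝ} {a : ℝ} (hb : b =O[𝓝 a] fun x => x - a)
    (hb_ne : ∀ᶠ x in 𝓝[≠] a, b x ≠ 0) (hu : ContinuousAt u a) (hua : u a ≠ 0) :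
    (fun x => (x - a)⁻¹) =O[𝓝[≠] a] fun x => u x ^ 2 / b x := by
  have hinv : (fun x => (x - a)⁻¹) =O[𝓝[≠] a] fun x => (b x)⁻¹ :=
    (hb.mono nhdsWithin_le_nhds).inv_rev (hb_ne.mono fun _ hx h => absurd h hx)
  simpa [div_eq_mul_inv] using
    ((one_isBigO_sq_of_continuousAt hu hua).mono nhdsWithin_le_nhds).mul hinv

theorem stmt_8_general (x₀ : ℝ) (hx₀ : x₀ ∈ Ioo (0:ℝ) 1)
    (b : ℝ → ℝ) (L : NNReal)
    (hb_lip : LipschitzOnWith L b (Icc 0 1))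
    (hb_zero : b x₀ = 0)
    (hb_pos : ∀ x ∈ Icc (0:ℝ) 1, x ≠ x₀ → 0 < b x)
    (u : ℝ → ℝ)
    (hu_cont : ContinuousOn u (Icc 0 1))
    (hint : IntegrableOn (fun x => (u x) ^ 2 / b x) (Ioo (0:ℝ) 1)) :
    u x₀ = 0 := by
  by_contra hux₀
  have hI : Icc (0:ℝ) 1 ∈ 𝓝 x₀ := Icc_mem_nhds hx₀.1 hx₀.2
  have hb_ne : ∀ᶠ x in 𝓝[≠] x₀, b x ≠ 0 := by
    filter_upwards [nhdsWithin_le_nhds hI, self_mem_nhdsWithin] with x hx hne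
    exact (hb_pos x hx hne).ne'
  have hbigO := sub_inv_isBigO_sq_div (hb_lip.isBigO_sub_of_eq_zero hI hb_zero) hb_ne
    (hu_cont.continuousAt hI) hux₀
  refine not_intervalIntegrable_of_sub_inv_isBigO_punctured hbigO zero_ne_one ?_
    ((intervalIntegrable_iff_integrableOn_Ioo_of_le zero_le_one).2 hint)
  rw [uIcc_of_le zero_le_one]
  exact Ioo_subset_Icc_self hx₀

/-- Lemma 2.4: if `b ∈ W^{1,∞}(0,1)` vanishes only at the interior point `x₀` with
`(x-x₀)b' ≤ K₂ b` a.e., `K₂ ≥ 1`, and `u ∈ W^{1,1}₀(0,1)` (absolutely continuous with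
`u 0 = u 1 = 0`) satisfies `∫ u²/b < ∞`, then `u x₀ = 0`. -/
theorem stmt_8 (x₀ K₂ : ℝ) (hx₀ : x₀ ∈ Ioo (0:ℝ) 1) (hK₂ : 1 ≤ K₂)
    (b b' : ℝ → ℝ) (L : NNReal)
    (hb_lip : LipschitzOnWith L b (Icc 0 1))
    (hb_deriv : ∀ᵐ x ∂(volume.restrict (Ioo (0:ℝ) 1)), HasDerivAt b (b' x) x)
    (hb_zero : b x₀ = 0)
    (hb_pos : ∀ x ∈ Icc (0:ℝ) 1, x ≠ x₀ → 0 < b x)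
    (hbdeg : ∀ᵐ x ∂(volume.restrict (Ioo (0:ℝ) 1)), (x - x₀) * b' x ≤ K₂ * b x)
    (u : ℝ → ℝ)
    (hu_cont : ContinuousOn u (Icc 0 1))
    (hu0 : u 0 = 0) (hu1 : u 1 = 0)
    (hint : IntegrableOn (fun x => (u x) ^ 2 / b x) (Ioo (0:ℝ) 1)) :
    u x₀ = 0 :=
  stmt_8_general x₀ hx₀ b L hb_lip hb_zero hb_pos u hu_cont hint
end
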